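/- arXiv:2308.04289 — 2 statements merged into one kernel-verified Lean document; each statement's English description precedes it below -/
import Mathlib

section
/- Let C be a substring of T that is neither right-branching nor a suffix of T, so all occurrences of C in T are followed by the same character a. Let C' = X·a where C = c·X for some character c (i.e., C' is obtained by dropping the first character of C and appending a). Then |C'| = |C| and Cov(C') ≥ Cov(C). -/
/-- `S` occurs in `T` at (0-indexed) position `i`. -/
def occursAt {α : Type*} (T S : List α) (i : ℕ) : Prop :=
  (T.drop i).take S.length = S

/-- `V` is primitive: it is not a proper power. -/
def Primitive {α : Type*} (V : List α) : Prop :=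
  ∀ (U : List α) (d : ℕ), 0 < d → V = (List.replicate d U).flatten → d = 1

/-- `p` is a period of `F`. -/
def IsPeriod {α : Type*} (F : List α) (p : ℕ) : Prop :=
  1 ≤ p ∧ ∀ k, k + p < F.length → F[k]? = F[k + p]?

/-- `p` is the smallest period of `F`. -/
def MinPeriod {α : Type*} (F : List α) (p : ℕ) : Prop :=
  IsPeriod F p ∧ ∀ q, IsPeriod F q → p ≤ q

/-- `(a,b,p)` is a run in `T` (0-indexed, positions `a..b` inclusive). -/
def IsRun {α : Type*} (T : List α) (a b p : ℕ) : Prop :=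
  a ≤ b ∧ b < T.length ∧
  MinPeriod ((T.drop a).take (b - a + 1)) p ∧
  2 * p ≤ b - a + 1 ∧
  (a = 0 ∨ T[a - 1]? ≠ T[a - 1 + p]?) ∧
  (b + 1 = T.length ∨ T[b + 1]? ≠ T[b + 1 - p]?)

/-- `(i,j)` is a consecutive occurrence of `S` in `T`. -/
def ConsOcc {α : Type*} (T S : List α) (i j : ℕ) : Prop :=
  i < j ∧ occursAt T S i ∧ occursAt T S j ∧ ∀ k, i < k → k < j → ¬ occursAt T S k

/-- Overlapping consecutive occurrences of `S` in `T`. -/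
def OvOcc {α : Type*} (T S : List α) : Set (ℕ × ℕ) :=
  {q | ConsOcc T S q.1 q.2 ∧ q.2 < q.1 + S.length}

/-- Non-overlapping consecutive occurrences of `S` in `T`. -/
def NovOcc {α : Type*} (T S : List α) : Set (ℕ × ℕ) :=
  {q | ConsOcc T S q.1 q.2 ∧ q.1 + S.length ≤ q.2}

/-- Positions of `T` covered by occurrences of `S`. -/
def Covered {α : Type*} (T S : List α) : Set ℕ :=
  {k | ∃ i, occursAt T S i ∧ i ≤ k ∧ k < i + S.length}

/-- Number of positions of `T` covered by occurrences of `S`. -/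
noncomputable def Cov {α : Type*} (T S : List α) : ℕ := (Covered T S).ncard

/-- Number of occurrences of `S` in `T`. -/
noncomputable def Occ {α : Type*} (T S : List α) : ℕ := {i | occursAt T S i}.ncard

/-- One plus the number of non-overlapping consecutive occurrences. -/
noncomputable def nov {α : Type*} (T S : List α) : ℕ := 1 + (NovOcc T S).ncard

/-- `S` is right-branching in `T` (end of text acts as a special end marker `none`). -/
def RightBranching {α : Type*} (T S : List α) : Prop :=
  ∃ i j, occursAt T S i ∧ occursAt T S j ∧ T[i + S.length]? ≠ T[j + S.length]?

lemma occ_len_le {α : Type*} {T S : List α} {i : ℕ} (hS : S ≠ []) (h : occursAt T S i) :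
    i + S.length ≤ T.length := by
  unfold occursAt at h
  have hlen := congrArg List.length h
  have h0 : 0 < S.length := List.length_pos_iff.mpr hS
  rw [List.length_take, List.length_drop] at hlen
  omega

lemma occ_shift {α : Type*} {T : List α} {c a : α} {X : List α} {i : ℕ}
    (h : occursAt T (c :: X) i) (ha : T[i + (c :: X).length]? = some a) :
    occursAt T (X ++ [a]) (i + 1) := by
  unfold occursAt at *
  have hdi : T.drop i = (c :: X) ++ T.drop (i + (X.length + 1)) := by
    conv_lhs => rw [← List.take_append_drop ((c :: X).length) (T.drop i)]
    rw [h, List.drop_drop]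
    congr 2
  have hd1 : T.drop (i + 1) = X ++ T.drop (i + (X.length + 1)) := by
    have h2 : T.drop (i + 1) = (T.drop i).drop 1 := by rw [List.drop_drop]
    rw [h2, hdi]; simp
  have hget : (T.drop (i + (X.length + 1)))[0]? = some a := by
    have h1 : (T.drop (i+1))[X.length]? = T[(i+1)+X.length]? := by
      rw [List.getElem?_drop]
    rw [hd1] at h1
    rw [List.getElem?_append_right (le_refl _)] at h1
    simp only [Nat.sub_self] at h1
    rw [h1, ← ha]
    congr 1
    simp
    omega
  obtain ⟨a', R', hR'⟩ := List.exists_cons_of_ne_nil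
    (l := T.drop (i + (X.length + 1))) (by intro h0; rw [h0] at hget; simp at hget)
  have haa : a' = a := by rw [hR'] at hget; simpa using hget
  rw [hd1, hR', haa, List.take_append]
  simp

theorem stmt10 {α : Type*} (T : List α) (c a : α) (X : List α)
    (hsub : ∃ i, occursAt T (c :: X) i)
    (hsame : ∀ i, occursAt T (c :: X) i → T[i + (c :: X).length]? = some a) :
    (X ++ [a]).length = (c :: X).length ∧ Cov T (c :: X) ≤ Cov T (X ++ [a]) := by
  constructor
  · simp
  · have hsubset : (· + 1) '' Covered T (c :: X) ⊆ Covered T (X ++ [a]) := by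
      rintro k ⟨m, ⟨i, hocc, him, hmlt⟩, rfl⟩
      refine ⟨i + 1, occ_shift hocc (hsame i hocc), by show i + 1 ≤ m + 1; omega, ?_⟩
      simp only [List.length_cons, List.length_append, List.length_singleton] at hmlt ⊢
      show m + 1 < _
      omega
    have hfin : (Covered T (X ++ [a])).Finite := by
      apply Set.Finite.subset (Set.finite_Iio T.length)
      rintro k ⟨i, hocc, him, hk⟩
      have := occ_len_le (by simp) hocc
      exact lt_of_lt_of_le hk this
    calc Cov T (c :: X) = ((· + 1) '' Covered T (c :: X)).ncard := by
          rw [Set.ncard_image_of_injective _ (add_left_injective 1)]; rfl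
      _ ≤ Cov T (X ++ [a]) := Set.ncard_le_ncard hsubset hfin
end

section
/- If (i,j) is an overlapping consecutive occurrence of a string S in T (so p := j - i < |S|), then the prefix X = T[i..i+p) of T of length p starting at i is primitive. -/
/-
If `X = T[i, i + p) = U ^ d` with `d ≥ 2` and `S` occurs at `i` and `i + p`, then the whole
window `T[i, i + p + |S|)` has period `|U|`: it has period `p` because of the two occurrences,
and its first `p` letters have period `|U|`, which divides `p`. Shifting by `|U| < p` therefore
gives an occurrence of `S` strictly between `i` and `i + p`, so `(i, i + p)` is not consecutive.
-/

theorem apply_eq_apply_mod_of_periodic_lt {β : Type*} {f : ℕ → β} {p n : ℕ}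
    (h : ∀ t, t + p < n → f t = f (t + p)) : ∀ t < n, f t = f (t % p) := by
  intro t
  induction t using Nat.strong_induction_on with
  | _ t ih =>
    intro ht
    rcases Nat.lt_or_ge t p with htp | htp
    · rw [Nat.mod_eq_of_lt htp]
    · rcases Nat.eq_zero_or_pos p with hp | hp
      · rw [hp, Nat.mod_zero]
      · have hshift := h (t - p) (by omega)
        rw [Nat.sub_add_cancel htp] at hshift
        rw [← hshift, ih (t - p) (by omega) (by omega), ← Nat.mod_eq_sub_mod htp]

theorem List.getElem?_flatten_replicate {α : Type*} (U : List α) (d r : ℕ)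
    (hr : r < d * U.length) : (List.replicate d U).flatten[r]? = U[r % U.length]? := by
  induction d generalizing r with
  | zero => simp at hr
  | succ d ih =>
    rw [List.replicate_succ, List.flatten_cons]
    rcases Nat.lt_or_ge r U.length with h | h
    · rw [List.getElem?_append_left h, Nat.mod_eq_of_lt h]
    · rw [List.getElem?_append_right h, ih (r - U.length) (by rw [Nat.succ_mul] at hr; omega),
        ← Nat.mod_eq_sub_mod h]

section Occurrences

variable {α : Type*} {T S : List α}

theorem occursAt_iff_getElem? {i : ℕ} :
    occursAt T S i ↔ ∀ t < S.length, T[i + t]? = S[t]? := by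
  unfold occursAt
  constructor
  · intro h t ht
    rw [← h, List.getElem?_take_of_lt ht, List.getElem?_drop]
  · intro h
    apply List.ext_getElem?
    intro t
    rcases Nat.lt_or_ge t S.length with ht | ht
    · rw [List.getElem?_take_of_lt ht, List.getElem?_drop, h t ht]
    · rw [List.getElem?_take_eq_none ht, List.getElem?_eq_none ht]

theorem occursAt.add_length_le {i : ℕ} (h : occursAt T S i) (hS : 0 < S.length) :
    i + S.length ≤ T.length := by
  have hlen := congrArg List.length h
  simp only [List.length_take, List.length_drop] at hlen
  omega

theorem occursAt_add_of_getElem?_eq_mod {U : List α} {i p : ℕ} (hp : 0 < p)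
    (hi : occursAt T S i) (hj : occursAt T S (i + p)) (hdvd : U.length ∣ p)
    (hU : ∀ t < p, T[i + t]? = U[t % U.length]?) : occursAt T S (i + U.length) := by
  rw [occursAt_iff_getElem?] at hi hj ⊢
  have hper : ∀ t, t + p < p + S.length → T[i + t]? = T[i + (t + p)]? := fun t ht => by
    rw [hi t (by omega), ← hj t (by omega), add_comm t p, add_assoc]
  have hwindow : ∀ t < p + S.length, T[i + t]? = U[t % U.length]? := fun t ht => by
    rw [apply_eq_apply_mod_of_periodic_lt (f := fun t => T[i + t]?) hper t ht,
      hU _ (Nat.mod_lt _ hp), Nat.mod_mod_of_dvd _ hdvd]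
  have hup : U.length ≤ p := Nat.le_of_dvd hp hdvd
  intro t ht
  rw [← hi t ht, add_assoc, hwindow _ (by omega), hwindow _ (by omega), Nat.add_mod_left]

end Occurrences

theorem stmt11 {α : Type*} (T S : List α) (i j : ℕ)
    (hcons : ConsOcc T S i j) (hov : j < i + S.length) :
    Primitive ((T.drop i).take (j - i)) := by
  obtain ⟨hij, hi, hj, hmin⟩ := hcons
  intro U d hd hX
  by_contra hd1
  obtain ⟨p, rfl⟩ : ∃ p, j = i + p := ⟨j - i, by omega⟩
  rw [Nat.add_sub_cancel_left] at hX
  have hT : i + p ≤ T.length := by have := hj.add_length_le (by omega); omega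
  have hlen : p = d * U.length := by
    simpa [List.length_flatten, List.sum_replicate, Nat.min_eq_left (by omega : p ≤ T.length - i)]
      using congrArg List.length hX
  have hU : ∀ t < p, T[i + t]? = U[t % U.length]? := fun t ht => by
    rw [← List.getElem?_flatten_replicate U d t (by omega), ← hX, List.getElem?_take_of_lt ht,
      List.getElem?_drop]
  have hupos : 0 < U.length := Nat.pos_of_ne_zero (by rintro h; simp [h] at hlen; omega)
  have hup : U.length < p := by
    rw [hlen]; exact lt_mul_left hupos (by omega)
  exact hmin (i + U.length) (by omega) (by omega)
    (occursAt_add_of_getElem?_eq_mod (by omega) hi hj ⟨d, by rw [hlen, mul_comm]⟩ hU)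
end
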